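/- arXiv:2212.01970 — 3 statements merged into one kernel-verified Lean document; each statement's English description precedes it below -/
import Mathlib

section
/- Let n ≥ 3, F > 0, ξ ∈ ℝ, η ∈ ℝ^{n-1}, and let S be a symmetric bilinear form on ℝ^{n-1}. Suppose that for every unit vector ω ∈ ℝ^{n-1}, S(w(ω), w(ω)) = 0, where w(ω) = ((ω·η)/(ξ²+F²)) η + ω. Then S = 0. -/
/-!
The map `w : ω ↦ ω + (⟪ω, η⟫ / c) • η` with `c = ξ² + F² > 0` is linear and positive definite,
`⟪w ω, ω⟫ = ‖ω‖² + ⟪ω, η⟫² / c`, hence invertible. The symmetric form `S (w ·) (w ·)` is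
2-homogeneous and vanishes on the unit sphere, so it vanishes by polarization, and then so does
`S` because `w` is onto.
-/

open scoped RealInnerProductSpace

namespace LinearMap.BilinForm

variable {E : Type*} [NormedAddCommGroup E] [NormedSpace ℝ E]

theorem eq_zero_of_isSymm_of_forall_norm_eq_one {B : LinearMap.BilinForm ℝ E} (hB : B.IsSymm)
    (h : ∀ x, ‖x‖ = 1 → B x x = 0) : B = 0 := by
  refine ext_of_isSymm hB isSymm_zero fun x ↦ ?_
  rcases eq_or_ne x 0 with rfl | hx
  · simp
  have hnorm : ‖x‖ ≠ 0 := norm_ne_zero_iff.mpr hx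
  set u := ‖x‖⁻¹ • x
  have hu : ‖u‖ = 1 := by rw [norm_smul, norm_inv, norm_norm, inv_mul_cancel₀ hnorm]
  have hxu : ‖x‖ • u = x := smul_inv_smul₀ hnorm x
  calc B x x = B (‖x‖ • u) (‖x‖ • u) := by rw [hxu]
    _ = ‖x‖ ^ 2 * B u u := by simp only [map_smul, LinearMap.smul_apply, smul_eq_mul]; ring
    _ = 0 := by rw [h u hu, mul_zero]

end LinearMap.BilinForm

section IdAddInnerSMul

variable {E : Type*} [NormedAddCommGroup E] [InnerProductSpace ℝ E]

noncomputable def idAddInnerSMul (η : E) (c : ℝ) : E →ₗ[ℝ] E :=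
  LinearMap.id + (innerₛₗ ℝ η).smulRight (c⁻¹ • η)

theorem idAddInnerSMul_apply (η : E) (c : ℝ) (x : E) :
    idAddInnerSMul η c x = (⟪x, η⟫ / c) • η + x := by
  simp [idAddInnerSMul, real_inner_comm η, smul_smul, div_eq_mul_inv, add_comm]

theorem inner_idAddInnerSMul_self (η : E) (c : ℝ) (x : E) :
    ⟪idAddInnerSMul η c x, x⟫ = ‖x‖ ^ 2 + ⟪x, η⟫ ^ 2 / c := by
  rw [idAddInnerSMul_apply, inner_add_left, real_inner_smul_left, real_inner_comm η,
    real_inner_self_eq_norm_sq]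
  ring

theorem idAddInnerSMul_injective (η : E) {c : ℝ} (hc : 0 < c) :
    Function.Injective (idAddInnerSMul η c) := by
  refine (injective_iff_map_eq_zero _).mpr fun x hx ↦ ?_
  have hinner := inner_idAddInnerSMul_self η c x
  rw [hx, inner_zero_left] at hinner
  have hsq := (add_eq_zero_iff_of_nonneg (sq_nonneg ‖x‖) (by positivity)).mp hinner.symm
  simpa using hsq.1

theorem idAddInnerSMul_surjective [FiniteDimensional ℝ E] (η : E) {c : ℝ} (hc : 0 < c) :
    Function.Surjective (idAddInnerSMul η c) :=
  LinearMap.injective_iff_surjective.mp (idAddInnerSMul_injective η hc)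

end IdAddInnerSMul

theorem stmt5_general (n : ℕ) (F ξ : ℝ) (hF : 0 < F)
    (η : EuclideanSpace ℝ (Fin (n-1)))
    (S : EuclideanSpace ℝ (Fin (n-1)) →ₗ[ℝ] EuclideanSpace ℝ (Fin (n-1)) →ₗ[ℝ] ℝ)
    (hsymm : ∀ x y, S x y = S y x)
    (h : ∀ ω : EuclideanSpace ℝ (Fin (n-1)), ‖ω‖ = 1 →
      S ((⟪ω, η⟫ / (ξ^2 + F^2)) • η + ω) ((⟪ω, η⟫ / (ξ^2 + F^2)) • η + ω) = 0) :
    S = 0 := by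
  set w := idAddInnerSMul η (ξ ^ 2 + F ^ 2)
  have hw : Function.Surjective w := idAddInnerSMul_surjective η (by positivity)
  have hSw : S.compl₁₂ w w = 0 :=
    LinearMap.BilinForm.eq_zero_of_isSymm_of_forall_norm_eq_one ⟨fun x y ↦ hsymm (w x) (w y)⟩
      fun ω hω ↦ by simpa only [LinearMap.compl₁₂_apply, w, idAddInnerSMul_apply] using h ω hω
  rw [← LinearMap.compl₁₂_inj hw hw, hSw]
  ext
  simp

/-- main linear-algebra content of 2-tensor ellipticity at finite
points: vanishing of a symmetric bilinear form on all vectors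
`w(ω) = ((ω·η)/(ξ²+F²)) η + ω`, `ω` a unit vector, forces it to vanish. -/
theorem stmt5 (n : ℕ) (hn : 3 ≤ n) (F ξ : ℝ) (hF : 0 < F)
    (η : EuclideanSpace ℝ (Fin (n-1)))
    (S : EuclideanSpace ℝ (Fin (n-1)) →ₗ[ℝ] EuclideanSpace ℝ (Fin (n-1)) →ₗ[ℝ] ℝ)
    (hsymm : ∀ x y, S x y = S y x)
    (h : ∀ ω : EuclideanSpace ℝ (Fin (n-1)), ‖ω‖ = 1 →
      S ((⟪ω, η⟫ / (ξ^2 + F^2)) • η + ω) ((⟪ω, η⟫ / (ξ^2 + F^2)) • η + ω) = 0) :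
    S = 0 :=
  stmt5_general n F ξ hF η S hsymm h
end

section
/- For F > 0, ξ ∈ ℝ, η ∈ ℝ^{n-1}, the 2×2 block matrix M(ξ,η) = [[ξ²+F²+½|η|², ½(ξ−iF)⟨η,·⟩], [½(ξ+iF)η⊗, ½(ξ²+F²)Id + ½|η|²Id + ½ η⊗η]] acting on ℂ ⊕ ℂ^{n-1} is positive definite Hermitian, with smallest eigenvalue bounded below by c(ξ²+F²+|η|²) for some c > 0 independent of ξ, η, F. -/
/-- the block matrix symbol of the conjugated Laplacian on one
forms is positive definite Hermitian, with smallest eigenvalue bounded below by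
`c(ξ²+F²+|η|²)` uniformly in `ξ, η, F`. The matrix acts on `ℂ ⊕ ℂ^{n-1}` by
`(v₀,v₁) ↦ ((ξ²+F²+½|η|²)v₀ + ½(ξ−iF)⟨η,v₁⟩,
½(ξ+iF)v₀ η + (½(ξ²+F²)+½|η|²)v₁ + ½⟨η,v₁⟩η)`. -/
theorem stmt13 (n : ℕ) (hn : 3 ≤ n) :
    ∃ c : ℝ, 0 < c ∧ ∀ (F ξ : ℝ), 0 < F → ∀ (η : Fin (n-1) → ℝ)
      (v₀ : ℂ) (v₁ : Fin (n-1) → ℂ),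
      (let N2 : ℝ := ∑ i, (η i)^2
       let ηv : ℂ := ∑ i, (η i : ℂ) * v₁ i
       let m₀ : ℂ := ((ξ^2 + F^2 + N2/2 : ℝ) : ℂ) * v₀
          + (1/2) * ((ξ : ℂ) - Complex.I * F) * ηv
       let m₁ : Fin (n-1) → ℂ := fun i =>
          (1/2) * ((ξ : ℂ) + Complex.I * F) * v₀ * (η i : ℂ)
          + (((ξ^2 + F^2)/2 + N2/2 : ℝ) : ℂ) * v₁ i + (1/2) * ηv * (η i : ℂ)
       let Q : ℂ := (starRingEnd ℂ) v₀ * m₀ + ∑ i, (starRingEnd ℂ) (v₁ i) * m₁ i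
       Q.im = 0 ∧
         c * (ξ^2 + F^2 + N2) * (‖v₀‖^2 + ∑ i, ‖v₁ i‖^2)
           ≤ Q.re) := by
  refine ⟨1/2, by norm_num, ?_⟩
  intro F ξ hF η v₀ v₁
  dsimp only
  set N : ℝ := ∑ i, (η i)^2 with hN
  set w : ℂ := ∑ i, (η i : ℂ) * v₁ i with hwdef
  set S : ℝ := ∑ i, ‖v₁ i‖^2 with hSdef
  set z : ℂ := (ξ:ℂ) - Complex.I * F with hz
  set a : ℝ := ξ^2 + F^2 with ha
  have hconjz : (starRingEnd ℂ) z = (ξ:ℂ) + Complex.I * F := by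
    simp [hz, map_mul, Complex.conj_ofReal, Complex.conj_I]
  have hwc : (∑ i, (η i : ℂ) * (starRingEnd ℂ) (v₁ i)) = (starRingEnd ℂ) w := by
    rw [hwdef, map_sum]
    exact Finset.sum_congr rfl fun i _ => by simp [map_mul, Complex.conj_ofReal]
  have hsv : (∑ i, (starRingEnd ℂ) (v₁ i) * v₁ i) = (S : ℂ) := by
    rw [hSdef]; push_cast
    exact Finset.sum_congr rfl fun i _ => by
      rw [mul_comm, Complex.mul_conj]; norm_cast; exact (Complex.sq_norm _).symm
  have hvv : (starRingEnd ℂ) v₀ * v₀ = ((‖v₀‖ ^ 2 : ℝ) : ℂ) := by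
    rw [mul_comm, Complex.mul_conj, Complex.sq_norm]
  have hww : w * (starRingEnd ℂ) w = ((‖w‖ ^ 2 : ℝ) : ℂ) := by
    rw [Complex.mul_conj, Complex.sq_norm]
  set u : ℂ := z * w * (starRingEnd ℂ) v₀ with hu
  have key : (starRingEnd ℂ) v₀ * (((ξ^2 + F^2 + N/2 : ℝ) : ℂ) * v₀
          + (1/2) * ((ξ : ℂ) - Complex.I * F) * w)
      + ∑ i, (starRingEnd ℂ) (v₁ i) * ((1/2) * ((ξ : ℂ) + Complex.I * F) * v₀ * (η i : ℂ)
          + (((ξ^2 + F^2)/2 + N/2 : ℝ) : ℂ) * v₁ i + (1/2) * w * (η i : ℂ))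
      = (((a + N/2) * ‖v₀‖^2 + (a/2 + N/2) * S
          + (1/2) * ‖w‖^2 + u.re : ℝ) : ℂ) := by
    have hsplit : ∑ i, (starRingEnd ℂ) (v₁ i) * ((1/2) * ((ξ : ℂ) + Complex.I * F) * v₀ * (η i : ℂ)
          + (((ξ^2 + F^2)/2 + N/2 : ℝ) : ℂ) * v₁ i + (1/2) * w * (η i : ℂ))
        = (1/2) * ((ξ : ℂ) + Complex.I * F) * v₀ * (starRingEnd ℂ) w
          + (((ξ^2 + F^2)/2 + N/2 : ℝ) : ℂ) * (S : ℂ)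
          + (1/2) * w * (starRingEnd ℂ) w :=
      calc ∑ i, (starRingEnd ℂ) (v₁ i) * ((1/2) * ((ξ : ℂ) + Complex.I * F) * v₀ * (η i : ℂ)
              + (((ξ^2 + F^2)/2 + N/2 : ℝ) : ℂ) * v₁ i + (1/2) * w * (η i : ℂ))
          = ∑ i, ((1/2) * ((ξ:ℂ) + Complex.I*F) * v₀ * ((η i:ℂ) * (starRingEnd ℂ) (v₁ i))
              + (((ξ^2+F^2)/2 + N/2 : ℝ):ℂ) * ((starRingEnd ℂ) (v₁ i) * v₁ i)
              + (1/2) * w * ((η i:ℂ) * (starRingEnd ℂ) (v₁ i))) :=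
            Finset.sum_congr rfl fun i _ => by ring
        _ = (1/2) * ((ξ:ℂ) + Complex.I*F) * v₀ * (∑ i, (η i:ℂ) * (starRingEnd ℂ) (v₁ i))
              + (((ξ^2+F^2)/2 + N/2 : ℝ):ℂ) * (∑ i, (starRingEnd ℂ) (v₁ i) * v₁ i)
              + (1/2) * w * (∑ i, (η i:ℂ) * (starRingEnd ℂ) (v₁ i)) := by
            rw [Finset.sum_add_distrib, Finset.sum_add_distrib, ← Finset.mul_sum,
              ← Finset.mul_sum, ← Finset.mul_sum]
        _ = _ := by rw [hwc, hsv]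
    rw [hsplit, ← hconjz]
    have hre : u + (starRingEnd ℂ) u = ((2 * u.re : ℝ) : ℂ) := by
      rw [Complex.add_conj]
    have hconju : (starRingEnd ℂ) u = (starRingEnd ℂ) z * (starRingEnd ℂ) w * v₀ := by
      rw [hu]; simp [map_mul]
    have hexp : (starRingEnd ℂ) v₀ * (((ξ^2 + F^2 + N/2 : ℝ) : ℂ) * v₀
          + (1/2) * ((ξ : ℂ) - Complex.I * F) * w)
        + ((1/2) * (starRingEnd ℂ) z * v₀ * (starRingEnd ℂ) w
          + (((ξ^2 + F^2)/2 + N/2 : ℝ) : ℂ) * (S : ℂ)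
          + (1/2) * w * (starRingEnd ℂ) w)
        = ((ξ^2 + F^2 + N/2 : ℝ) : ℂ) * ((‖v₀‖ ^2 : ℝ) : ℂ)
          + (((ξ^2 + F^2)/2 + N/2 : ℝ) : ℂ) * (S : ℂ)
          + (1/2) * ((‖w‖ ^ 2 : ℝ) : ℂ)
          + (1/2) * (u + (starRingEnd ℂ) u) := by
      rw [hconju, hconjz, hu, ← hvv, ← hww, hz]
      ring
    rw [hexp, hre]
    push_cast [ha]
    ring
  constructor
  · rw [key]; exact Complex.ofReal_im _
  · rw [key, Complex.ofReal_re]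
    have habsz : ‖z‖ ^ 2 = a := by
      rw [Complex.sq_norm, hz, ha]
      simp [Complex.normSq_apply]
      ring
    have h1 : -(‖z‖ * ‖v₀‖ * ‖w‖) ≤ u.re := by
      have h := Complex.abs_re_le_norm u
      have habs : ‖u‖ = ‖z‖ * ‖v₀‖ * ‖w‖ := by
        rw [hu, norm_mul, norm_mul, Complex.norm_conj]; ring
      rw [habs] at h
      have := (abs_le.mp h).1
      linarith
    have hAM : 2 * (‖z‖ * ‖v₀‖) * ‖w‖
        ≤ (‖z‖ * ‖v₀‖)^2 + ‖w‖ ^ 2 :=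
      two_mul_le_add_sq _ _
    have h2 : (‖z‖ * ‖v₀‖)^2 = a * ‖v₀‖ ^2 := by
      rw [mul_pow, habsz]
    have hSnn : 0 ≤ S := by
      rw [hSdef]; exact Finset.sum_nonneg fun i _ => sq_nonneg _
    have hv0 : 0 ≤ ‖v₀‖ ^ 2 := sq_nonneg _
    have hwnn : 0 ≤ ‖w‖ ^ 2 := sq_nonneg _
    nlinarith [sq_nonneg F, sq_nonneg ξ]
end

section
/- Let n ≥ 3, ξ ∈ ℝ with ξ ≠ 0, η ∈ ℝ^{n-1}, and let v₁₁ be a symmetric bilinear form on ℝ^{n-1}. Suppose that for every unit vector ω with ξ λ̂ + η·ω = 0 (where λ̂ = −(η·ω)/ξ), the vector u(ω) = ((η·ω)/ξ)(η/ξ) + ω satisfies v₁₁(u(ω), u(ω)) = 0. Then v₁₁ = 0. -/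
open scoped RealInnerProductSpace

/-!
Writing `u(ω) = ω + (⟪η, ω⟫ / ξ²) η`, the map `u` is linear, so `Q := v₁₁(·, ·)` pulled back
along `u` is a quadratic form; it vanishes on the unit sphere, hence everywhere by homogeneity.
Since `ξ ≠ 0`, `u` is invertible (it is the identity plus a rank-one map with
`1 + ‖η‖² / ξ² ≠ 0`), so `Q` vanishes, and a symmetric bilinear form is recovered from its
quadratic form by polarization.
-/

theorem LinearMap.BilinMap.eq_zero_of_toQuadraticMap_eq_zero {R M N : Type*} [CommRing R]
    [Invertible (2 : R)] [AddCommGroup M] [Module R M] [AddCommGroup N] [Module R N]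
    {B : LinearMap.BilinMap R M N} (hB : ∀ x y, B x y = B y x) (hQ : B.toQuadraticMap = 0) :
    B = 0 := by
  rw [← QuadraticMap.associated_left_inverse R hB, hQ, map_zero]

theorem QuadraticMap.eq_zero_of_forall_norm_eq_one {E N : Type*} [NormedAddCommGroup E]
    [NormedSpace ℝ E] [AddCommGroup N] [Module ℝ N] {Q : QuadraticMap ℝ E N}
    (hQ : ∀ x, ‖x‖ = 1 → Q x = 0) : Q = 0 := by
  ext x
  rcases eq_or_ne x 0 with rfl | hx0
  · simp
  · have hx : ‖x‖ ≠ 0 := norm_ne_zero_iff.mpr hx0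
    rw [← smul_inv_smul₀ hx x, QuadraticMap.map_smul, hQ _ (by simp [norm_smul, hx]), smul_zero,
      zero_apply]

section CriticalLift

variable {E : Type*} [NormedAddCommGroup E] [InnerProductSpace ℝ E]

/-- The map `ω ↦ u(ω)`, whose unit-sphere values lie over the critical set `ξλ̂ + η·ω = 0`. -/
noncomputable def critLift (ξ : ℝ) (η : E) : E →ₗ[ℝ] E where
  toFun ω := (⟪η, ω⟫ / ξ ^ 2) • η + ω
  map_add' x y := by simp only [inner_add_right]; module
  map_smul' c x := by simp only [real_inner_smul_right, RingHom.id_apply]; module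

theorem critLift_surjective {ξ : ℝ} (hξ : ξ ≠ 0) (η : E) : Function.Surjective (critLift ξ η) := by
  intro a
  have hden : ξ ^ 2 + ‖η‖ ^ 2 ≠ 0 := by positivity
  refine ⟨a - (⟪η, a⟫ / (ξ ^ 2 + ‖η‖ ^ 2)) • η, ?_⟩
  have hcoef : ⟪η, a - (⟪η, a⟫ / (ξ ^ 2 + ‖η‖ ^ 2)) • η⟫ / ξ ^ 2 = ⟪η, a⟫ / (ξ ^ 2 + ‖η‖ ^ 2) := by
    rw [inner_sub_right, real_inner_smul_right, real_inner_self_eq_norm_sq]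
    field_simp
    ring
  simp only [critLift, LinearMap.coe_mk, AddHom.coe_mk, hcoef]
  abel

end CriticalLift

theorem stmt14_general (n : ℕ) (ξ : ℝ) (hξ : ξ ≠ 0)
    (η : EuclideanSpace ℝ (Fin (n-1)))
    (v₁₁ : EuclideanSpace ℝ (Fin (n-1)) →ₗ[ℝ] EuclideanSpace ℝ (Fin (n-1)) →ₗ[ℝ] ℝ)
    (hsymm : ∀ x y, v₁₁ x y = v₁₁ y x)
    (h : ∀ ω : EuclideanSpace ℝ (Fin (n-1)), ‖ω‖ = 1 →
      ξ * (-(⟪η, ω⟫ / ξ)) + ⟪η, ω⟫ = 0 →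
      v₁₁ ((⟪η, ω⟫ / ξ^2) • η + ω) ((⟪η, ω⟫ / ξ^2) • η + ω) = 0) :
    v₁₁ = 0 := by
  have hpullback : (LinearMap.BilinMap.toQuadraticMap v₁₁).comp (critLift ξ η) = 0 :=
    QuadraticMap.eq_zero_of_forall_norm_eq_one fun ω hω => h ω hω (by field_simp; ring)
  refine LinearMap.BilinMap.eq_zero_of_toQuadraticMap_eq_zero hsymm ?_
  ext x
  obtain ⟨ω, rfl⟩ := critLift_surjective hξ η x
  exact congr($hpullback ω)

/-- the ξ ≠ 0 case at fiber infinity for 2-tensors: vanishing of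
the symmetric bilinear form `v₁₁` on all vectors
`u(ω) = ((η·ω)/ξ)(η/ξ) + ω`, `ω` a unit vector (so that `(λ̂, ω)` with
`λ̂ = −(η·ω)/ξ` lies in the critical set `ξλ̂ + η·ω = 0`), forces `v₁₁ = 0`. -/
theorem stmt14 (n : ℕ) (hn : 3 ≤ n) (ξ : ℝ) (hξ : ξ ≠ 0)
    (η : EuclideanSpace ℝ (Fin (n-1)))
    (v₁₁ : EuclideanSpace ℝ (Fin (n-1)) →ₗ[ℝ] EuclideanSpace ℝ (Fin (n-1)) →ₗ[ℝ] ℝ)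
    (hsymm : ∀ x y, v₁₁ x y = v₁₁ y x)
    (h : ∀ ω : EuclideanSpace ℝ (Fin (n-1)), ‖ω‖ = 1 →
      ξ * (-(⟪η, ω⟫ / ξ)) + ⟪η, ω⟫ = 0 →
      v₁₁ ((⟪η, ω⟫ / ξ^2) • η + ω) ((⟪η, ω⟫ / ξ^2) • η + ω) = 0) :
    v₁₁ = 0 :=
  stmt14_general n ξ hξ η v₁₁ hsymm h
end
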